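/- Let k > 0, t > 0, σ > 0, ν > 0, and let u ∈ ℝ satisfy u²·σ²·ν/2 < 1. Then ∫₀^t −(1/ν)·log(1 − u²·e^{-2k·s}·σ²·ν/2) ds = (1/(2k·ν))·( dilog(u²·σ²·ν/2) − dilog(u²·σ²·ν·e^{-2k·t}/2) ), where dilog(z) := −∫₀^z log(1 − y)/y dy. -/

import Mathlib

/-!
On `Iio 1` the dilogarithm is a primitive of `-dslope (log (1 - ·)) 0`, the continuous extension
of `-log (1 - y) / y` across `y = 0`. Hence, as long as `a e^{c s}` stays below `1`,
`s ↦ dilog (a e^{c s})` has derivative `-c log (1 - a e^{c s})`, and the cumulant integral is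
a difference of two values of the dilogarithm.
-/

open Real MeasureTheory Set

/-- The real dilogarithm (Spence's function). -/
noncomputable def dilog (z : ℝ) : ℝ := -∫ y in (0:ℝ)..z, Real.log (1 - y) / y

lemma continuousOn_dslope_log_one_sub :
    ContinuousOn (dslope (fun y : ℝ => log (1 - y)) 0) (Iio 1) := by
  have hlog : ∀ y ∈ Iio (1 : ℝ), HasDerivAt (fun y : ℝ => log (1 - y)) (-1 / (1 - y)) y :=
    fun y hy => by
      simpa using ((hasDerivAt_id y).const_sub 1).log (sub_ne_zero.2 (ne_of_gt hy))
  exact (continuousOn_dslope (Iio_mem_nhds one_pos)).2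
    ⟨fun y hy => (hlog y hy).continuousAt.continuousWithinAt,
      (hlog 0 (mem_Iio.2 one_pos)).differentiableAt⟩

lemma dilog_eq_neg_integral_dslope (z : ℝ) :
    dilog z = -∫ y in (0:ℝ)..z, dslope (fun y : ℝ => log (1 - y)) 0 y := by
  rw [dilog, intervalIntegral.integral_congr_ae]
  filter_upwards [Measure.ae_ne volume (0 : ℝ)] with y hy _
  simp [dslope_of_ne _ hy, slope_def_field]

lemma hasDerivAt_dilog {z : ℝ} (hz : z < 1) :
    HasDerivAt dilog (-dslope (fun y : ℝ => log (1 - y)) 0 z) z := by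
  have hcont := continuousOn_dslope_log_one_sub
  have hsub : uIcc 0 z ⊆ Iio 1 := fun y hy => by
    rcases hy with ⟨-, hy⟩; exact lt_of_le_of_lt hy (max_lt one_pos hz)
  rw [show dilog = _ from funext dilog_eq_neg_integral_dslope]
  exact (intervalIntegral.integral_hasDerivAt_right ((hcont.mono hsub).intervalIntegrable)
    (hcont.stronglyMeasurableAtFilter isOpen_Iio z hz)
    (hcont.continuousAt (Iio_mem_nhds hz))).neg

lemma mul_exp_lt_one {a c s : ℝ} (ha : a < 1) (hcs : c * s ≤ 0) : a * exp (c * s) < 1 := by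
  have hexp : exp (c * s) ≤ 1 := exp_le_one_iff.2 hcs
  rcases le_or_gt a 0 with ha0 | ha0
  · nlinarith [exp_pos (c * s)]
  · nlinarith

lemma hasDerivAt_dilog_mul_exp {a c s : ℝ} (h : a * exp (c * s) < 1) :
    HasDerivAt (fun s => dilog (a * exp (c * s))) (-c * log (1 - a * exp (c * s))) s := by
  have hinner : HasDerivAt (fun s => a * exp (c * s)) (a * exp (c * s) * c) s := by
    simpa [mul_assoc, mul_comm c] using ((hasDerivAt_mul_const c).exp).const_mul a
  have hslope := sub_smul_dslope (fun y : ℝ => log (1 - y)) 0 (a * exp (c * s))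
  simp only [sub_zero, smul_eq_mul, log_one] at hslope
  rw [← hslope]
  refine ((hasDerivAt_dilog h).comp s hinner).congr_deriv ?_
  ring

lemma integral_log_one_sub_mul_exp {a c t : ℝ} (hc : c ≠ 0)
    (h : ∀ s ∈ uIcc 0 t, a * exp (c * s) < 1) :
    ∫ s in (0:ℝ)..t, log (1 - a * exp (c * s)) = (dilog a - dilog (a * exp (c * t))) / c := by
  have hcont : ContinuousOn (fun s => log (1 - a * exp (c * s))) (uIcc 0 t) :=
    ContinuousOn.log (by fun_prop) fun s hs => by linarith [h s hs]
  have hftc := intervalIntegral.integral_eq_sub_of_hasDerivAt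
    (fun s hs => hasDerivAt_dilog_mul_exp (h s hs)) (hcont.const_smul (-c)).intervalIntegrable
  simp only [intervalIntegral.integral_const_mul, mul_zero, exp_zero, mul_one] at hftc
  field_simp
  linarith

theorem ousvg_increment_cumulant_general
    (k t σ ν u : ℝ) (hk : 0 < k) (ht : 0 < t)
    (hu : u^2 * σ^2 * ν / 2 < 1) :
    ∫ s in (0:ℝ)..t,
        -(1/ν) * Real.log (1 - u^2 * Real.exp (-2*k*s) * σ^2 * ν / 2) =
      (1/(2*k*ν)) * (dilog (u^2 * σ^2 * ν / 2)
        - dilog (u^2 * σ^2 * ν * Real.exp (-2*k*t) / 2)) := by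
  set A := u^2 * σ^2 * ν / 2
  have hbelow : ∀ s ∈ uIcc 0 t, A * exp (-2 * k * s) < 1 := fun s hs => by
    rw [uIcc_of_le ht.le] at hs
    exact mul_exp_lt_one hu (by nlinarith [hs.1])
  have hlhs : ∀ s, u^2 * exp (-2*k*s) * σ^2 * ν / 2 = A * exp (-2 * k * s) := fun s => by ring
  have hrhs : u^2 * σ^2 * ν * exp (-2*k*t) / 2 = A * exp (-2 * k * t) := by ring
  simp only [hlhs, hrhs, intervalIntegral.integral_const_mul,
    integral_log_one_sub_mul_exp (by linarith : -2 * k ≠ 0) hbelow]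
  field_simp

/-- Cumulant function of the increment of the symmetric OU-VG process over
`[0, t]` (the paper's Equation (19)). -/
theorem ousvg_increment_cumulant
    (k t σ ν u : ℝ) (hk : 0 < k) (ht : 0 < t) (hσ : 0 < σ) (hν : 0 < ν)
    (hu : u^2 * σ^2 * ν / 2 < 1) :
    ∫ s in (0:ℝ)..t,
        -(1/ν) * Real.log (1 - u^2 * Real.exp (-2*k*s) * σ^2 * ν / 2) =
      (1/(2*k*ν)) * (dilog (u^2 * σ^2 * ν / 2)
        - dilog (u^2 * σ^2 * ν * Real.exp (-2*k*t) / 2)) :=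
  ousvg_increment_cumulant_general k t σ ν u hk ht hu
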